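/- arXiv:2011.06247 — 5 statements merged into one kernel-verified Lean document; each statement's English description precedes it below -/
import Mathlib

section
/- In the network investment game in which every enterprise is profitable (for every enterprise vertex k, (1+α_k)(X_k − Z_k) ≥ X_k where X_k = Σ_i x_{ki}), for every collateral matrix c the strategy profile in which all players cooperate in all of their investment opportunities is a Nash equilibrium of the induced game, and at this profile no collateral is realized (every investing player i receives enterprise return R_{ki} ≥ x_{ki} from each edge (k,i)). -/
open scoped BigOperators Classical

/-- A network investment game on `n` firms.  `x k i` is the amount that firm `i`
can invest in the enterprise of firm `k` (`x k i = 0` means that there is no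
edge `(k,i)`), `Z k` is the operational cost of the enterprise of `k` and
`α k` is its interest rate.  As in the paper, `Z k = 0` (w.l.o.g.) for
non-enterprise vertices and `α k > 0` for enterprise vertices. -/
structure InvestmentNetwork (n : ℕ) where
  x : Fin n → Fin n → ℝ
  Z : Fin n → ℝ
  α : Fin n → ℝ
  x_nonneg : ∀ k i, 0 ≤ x k i
  Z_nonneg : ∀ k, 0 ≤ Z k
  α_pos : ∀ k, (∃ i, 0 < x k i) → 0 < α k
  Z_spike : ∀ k, (∀ i, x k i = 0) → Z k = 0

namespace InvestmentNetwork

variable {n : ℕ}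

/-- `k` is an enterprise vertex: it has at least one potential investor. -/
def IsEnterprise (N : InvestmentNetwork n) (k : Fin n) : Prop :=
  ∃ i, 0 < N.x k i

/-- The set of edges `(k,i)` of the investment graph: `i` has an investment
opportunity in the enterprise of `k`. -/
noncomputable def edges (N : InvestmentNetwork n) : Finset (Fin n × Fin n) :=
  Finset.univ.filter (fun e => 0 < N.x e.1 e.2)

/-- A strategy profile is identified with its set of cooperate edges. -/
def IsProfile (N : InvestmentNetwork n) (C : Finset (Fin n × Fin n)) : Prop :=
  C ⊆ N.edges

/-- The total capital raised by enterprise `k` when `I` is a set of invest edges. -/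
noncomputable def raised (N : InvestmentNetwork n) (I : Finset (Fin n × Fin n)) (k : Fin n) : ℝ :=
  ∑ i : Fin n, if (k, i) ∈ I then N.x k i else 0

/-- `I` is a consistent set of invest edges within the cooperate edges `C`: the
investor of every edge of `I` is not in default when the invest edges are `I`. -/
def Consistent (N : InvestmentNetwork n) (C I : Finset (Fin n × Fin n)) : Prop :=
  I ⊆ C ∧ ∀ e ∈ I, N.Z e.2 ≤ N.raised I e.2

/-- The set of invest edges determined from the cooperate edges `C` by the
default-determination process (the greatest consistent subset of `C`,
i.e. the result of iteratively deleting the investments of defaulting firms). -/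
noncomputable def investSet (N : InvestmentNetwork n) (C : Finset (Fin n × Fin n)) :
    Finset (Fin n × Fin n) :=
  C.filter (fun e => ∃ I, N.Consistent C I ∧ e ∈ I)

/-- Firm `k` is in default under the cooperate edges `C`. -/
def Defaults (N : InvestmentNetwork n) (C : Finset (Fin n × Fin n)) (k : Fin n) : Prop :=
  N.raised (N.investSet C) k < N.Z k

/-- The enterprise return `R_{ki}` to investor `i` in enterprise `k` when the
set of invest edges is `I`. -/
noncomputable def ret (N : InvestmentNetwork n) (I : Finset (Fin n × Fin n)) (k i : Fin n) : ℝ :=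
  max 0 ((1 + N.α k) * (N.raised I k - N.Z k) * (N.x k i / N.raised I k))

/-- The utility of firm `i` from the edge `(k,i)` under cooperate edges `C` and
collateral matrix `c`: `x k i` if `i` defects, `0` if `i` cooperates but is in
default, and otherwise the return adjusted by the collateral. -/
noncomputable def edgeUtility (N : InvestmentNetwork n) (c : Fin n → Fin n → ℝ)
    (C : Finset (Fin n × Fin n)) (k i : Fin n) : ℝ :=
  if (k, i) ∉ C then N.x k i
  else if (k, i) ∉ N.investSet C then 0
  else if N.ret (N.investSet C) k i ≤ N.x k i - c k i then c k i + N.ret (N.investSet C) k i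
  else if N.ret (N.investSet C) k i ≤ N.x k i then N.x k i
  else N.ret (N.investSet C) k i

/-- Total utility of firm `i`: the sum of her utilities over all her
investment opportunities. -/
noncomputable def utility (N : InvestmentNetwork n) (c : Fin n → Fin n → ℝ)
    (C : Finset (Fin n × Fin n)) (i : Fin n) : ℝ :=
  ∑ k : Fin n, if (k, i) ∈ N.edges then N.edgeUtility c C k i else 0

/-- The number of investment opportunities in which `i` cooperates. -/
noncomputable def coopCount (C : Finset (Fin n × Fin n)) (i : Fin n) : ℕ :=
  (C.filter (fun e => e.2 = i)).card

/-- `c` is a collateral matrix: nonnegative and supported on the edges. -/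
def IsCollateral (N : InvestmentNetwork n) (c : Fin n → Fin n → ℝ) : Prop :=
  ∀ k i, 0 ≤ c k i ∧ (N.x k i = 0 → c k i = 0)

/-- `C'` is obtained from `C` by changing only decisions of player `i`. -/
def Deviation (C C' : Finset (Fin n × Fin n)) (i : Fin n) : Prop :=
  ∀ e : Fin n × Fin n, e.2 ≠ i → (e ∈ C ↔ e ∈ C')

/-- Nash equilibrium of the game induced by the collateral matrix `c`, with
ties broken towards investing: this is formalized by comparing utilities
lexicographically, an infinitesimal bonus being given for each cooperation. -/
def NashEq (N : InvestmentNetwork n) (c : Fin n → Fin n → ℝ)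
    (C : Finset (Fin n × Fin n)) : Prop :=
  N.IsProfile C ∧
    ∀ (i : Fin n) (C' : Finset (Fin n × Fin n)), N.IsProfile C' → Deviation C C' i →
      N.utility c C' i < N.utility c C i ∨
        (N.utility c C' i = N.utility c C i ∧ coopCount C' i ≤ coopCount C i)

/-- A viable collateral matrix: all-cooperate is the unique Nash equilibrium of
the induced game. -/
def Viable (N : InvestmentNetwork n) (c : Fin n → Fin n → ℝ) : Prop :=
  N.IsCollateral c ∧ N.NashEq c N.edges ∧ ∀ C, N.NashEq c C → C = N.edges

/-- The total collateral of a collateral matrix. -/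
noncomputable def total (c : Fin n → Fin n → ℝ) : ℝ :=
  ∑ k : Fin n, ∑ i : Fin n, c k i

/-- An optimal solution of the collateral minimization problem: a viable
collateral matrix of minimum total collateral. -/
def Optimal (N : InvestmentNetwork n) (c : Fin n → Fin n → ℝ) : Prop :=
  N.Viable c ∧ ∀ c', N.Viable c' → total c ≤ total c'

/-- All enterprises are (potentially) profitable:
`(1 + α k) * (X k - Z k) ≥ X k` where `X k = ∑ i, x k i`. -/
def Profitable (N : InvestmentNetwork n) : Prop :=
  ∀ k, N.IsEnterprise k → (∑ i, N.x k i) ≤ (1 + N.α k) * ((∑ i, N.x k i) - N.Z k)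

/-- Player `i` strictly prefers (ties being broken towards investing) to
cooperate rather than to defect w.r.t. enterprise `k`, when the cooperate
edges of the other decisions are those of `C`. -/
def StrictlyPrefersCoop (N : InvestmentNetwork n) (c : Fin n → Fin n → ℝ)
    (C : Finset (Fin n × Fin n)) (k i : Fin n) : Prop :=
  N.x k i ≤ N.edgeUtility c (insert (k, i) C) k i

/-- `σ` is an order of the edges along which iterated elimination of strictly
dominated strategies leads to the all-cooperate profile: at every step, given
that the previously processed edges cooperate, the player of the next edge
strictly prefers to cooperate whatever the remaining players do. -/
def ElimOrder (N : InvestmentNetwork n) (c : Fin n → Fin n → ℝ)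
    (σ : List (Fin n × Fin n)) : Prop :=
  σ.Nodup ∧ (∀ e, e ∈ σ ↔ e ∈ N.edges) ∧
    ∀ (t : ℕ) (ht : t < σ.length) (C : Finset (Fin n × Fin n)),
      N.IsProfile C → (∀ e ∈ σ.take t, e ∈ C) →
      N.StrictlyPrefersCoop c C (σ.get ⟨t, ht⟩).1 (σ.get ⟨t, ht⟩).2

end InvestmentNetwork

/-! Profitability makes the all-cooperate profile default-free, and there each investor's share
`(1 + α k) * (X k - Z k) * (x k i / X k)` of the return is at least `x k i`. The share is monotone
in the capital raised, which is largest when everybody invests, so under any profile a player gets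
at most `max (x k i) (return share)` from each edge, which is exactly what cooperating yields at
the all-cooperate profile; no deviation increases the number of cooperations, which settles ties. -/

namespace InvestmentNetwork

variable {n : ℕ} (N : InvestmentNetwork n)

lemma mem_edges {e : Fin n × Fin n} : e ∈ N.edges ↔ 0 < N.x e.1 e.2 := by
  simp [edges]

lemma x_eq_zero_of_not_mem_edges {k i : Fin n} (h : (k, i) ∉ N.edges) : N.x k i = 0 :=
  le_antisymm (not_lt.mp fun hx => h (N.mem_edges.mpr hx)) (N.x_nonneg k i)

lemma raised_edges (k : Fin n) : N.raised N.edges k = ∑ j, N.x k j := by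
  refine Finset.sum_congr rfl fun j _ => ?_
  by_cases h : (k, j) ∈ N.edges
  · rw [if_pos h]
  · rw [if_neg h, N.x_eq_zero_of_not_mem_edges h]

lemma sum_x_pos {k : Fin n} (hk : N.IsEnterprise k) : 0 < ∑ j, N.x k j := by
  obtain ⟨i, hi⟩ := hk
  exact Finset.sum_pos' (fun j _ => N.x_nonneg k j) ⟨i, Finset.mem_univ i, hi⟩

lemma Z_le_sum_x (hprof : N.Profitable) (k : Fin n) : N.Z k ≤ ∑ j, N.x k j := by
  by_cases hk : N.IsEnterprise k
  · have hα := N.α_pos k hk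
    have hX := N.sum_x_pos hk
    nlinarith [hprof k hk]
  · have hzero : ∀ i, N.x k i = 0 := fun i =>
      le_antisymm (not_lt.mp fun hx => hk ⟨i, hx⟩) (N.x_nonneg k i)
    rw [N.Z_spike k hzero]
    exact Finset.sum_nonneg fun j _ => N.x_nonneg k j

lemma consistent_edges (hprof : N.Profitable) : N.Consistent N.edges N.edges :=
  ⟨subset_rfl, fun e _ => N.raised_edges e.2 ▸ N.Z_le_sum_x hprof e.2⟩

lemma investSet_edges (hprof : N.Profitable) : N.investSet N.edges = N.edges :=
  Finset.filter_eq_self.mpr fun _ he => ⟨N.edges, N.consistent_edges hprof, he⟩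

lemma investSet_subset (C : Finset (Fin n × Fin n)) : N.investSet C ⊆ C :=
  Finset.filter_subset _ _

lemma raised_mono {I J : Finset (Fin n × Fin n)} (h : I ⊆ J) (k : Fin n) :
    N.raised I k ≤ N.raised J k := by
  refine Finset.sum_le_sum fun j _ => ?_
  by_cases hI : (k, j) ∈ I
  · rw [if_pos hI, if_pos (h hI)]
  · rw [if_neg hI]
    split_ifs
    exacts [N.x_nonneg k j, le_rfl]

lemma x_le_raised {I : Finset (Fin n × Fin n)} {k i : Fin n} (h : (k, i) ∈ I) :
    N.x k i ≤ N.raised I k := by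
  have hterm := Finset.single_le_sum (f := fun j => if (k, j) ∈ I then N.x k j else 0)
    (fun j _ => by split_ifs; exacts [N.x_nonneg k j, le_rfl]) (Finset.mem_univ i)
  rw [if_pos h] at hterm
  exact hterm

end InvestmentNetwork

lemma return_share_mono {a x Z Y X : ℝ} (ha : 0 ≤ a) (hx : 0 ≤ x) (hZ : 0 ≤ Z)
    (hY : 0 < Y) (hYX : Y ≤ X) :
    (1 + a) * (Y - Z) * (x / Y) ≤ (1 + a) * (X - Z) * (x / X) := by
  have hX : 0 < X := hY.trans_le hYX
  have hshare : ∀ W : ℝ, W ≠ 0 → (1 + a) * (W - Z) * (x / W) = (1 + a) * x * (1 - Z / W) := by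
    intro W hW
    field_simp
  rw [hshare Y hY.ne', hshare X hX.ne']
  have hZX : Z / X ≤ Z / Y := by gcongr
  have hcoef : 0 ≤ (1 + a) * x := by positivity
  nlinarith

namespace InvestmentNetwork

variable {n : ℕ} (N : InvestmentNetwork n)

lemma x_le_ret_edges (hprof : N.Profitable) {k i : Fin n} (h : (k, i) ∈ N.edges) :
    N.x k i ≤ N.ret N.edges k i := by
  have hx : 0 < N.x k i := N.mem_edges.mp h
  have hk : N.IsEnterprise k := ⟨i, hx⟩
  have hX := N.sum_x_pos hk
  refine le_max_of_le_right ?_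
  rw [N.raised_edges]
  calc N.x k i = (∑ j, N.x k j) * (N.x k i / ∑ j, N.x k j) := by field_simp
    _ ≤ _ := mul_le_mul_of_nonneg_right (hprof k hk) (div_nonneg hx.le hX.le)

lemma ret_le_ret_edges {C : Finset (Fin n × Fin n)} (hC : N.IsProfile C) {k i : Fin n}
    (h : (k, i) ∈ N.investSet C) : N.ret (N.investSet C) k i ≤ N.ret N.edges k i := by
  have hsub : N.investSet C ⊆ N.edges := (N.investSet_subset C).trans hC
  have hx : 0 < N.x k i := N.mem_edges.mp (hsub h)
  have hY : 0 < N.raised (N.investSet C) k := hx.trans_le (N.x_le_raised h)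
  exact max_le_max le_rfl <| return_share_mono (N.α_pos k ⟨i, hx⟩).le hx.le (N.Z_nonneg k) hY
    (N.raised_mono hsub k)

variable (c : Fin n → Fin n → ℝ)

lemma edgeUtility_le_of_le {C : Finset (Fin n × Fin n)} {k i : Fin n} {R : ℝ}
    (hx : N.x k i ≤ R) (hret : (k, i) ∈ N.investSet C → N.ret (N.investSet C) k i ≤ R) :
    N.edgeUtility c C k i ≤ R := by
  unfold edgeUtility
  by_cases hC : (k, i) ∈ C
  · by_cases hI : (k, i) ∈ N.investSet C
    · rw [if_neg (not_not.mpr hC), if_neg (not_not.mpr hI)]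
      split_ifs with hlow hmid
      · linarith
      · exact hx
      · exact hret hI
    · rw [if_neg (not_not.mpr hC), if_pos hI]
      exact (N.x_nonneg k i).trans hx
  · rwa [if_pos hC]

lemma edgeUtility_eq_ret {C : Finset (Fin n × Fin n)} {k i : Fin n} (hc : 0 ≤ c k i)
    (hI : (k, i) ∈ N.investSet C) (hx : N.x k i ≤ N.ret (N.investSet C) k i) :
    N.edgeUtility c C k i = N.ret (N.investSet C) k i := by
  unfold edgeUtility
  rw [if_neg (not_not.mpr (N.investSet_subset C hI)), if_neg (not_not.mpr hI)]
  split_ifs with hlow hmid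
  · linarith
  · linarith
  · rfl

lemma edgeUtility_le_edgeUtility_edges (hprof : N.Profitable) (hc : N.IsCollateral c)
    {C : Finset (Fin n × Fin n)} (hC : N.IsProfile C) {k i : Fin n} (h : (k, i) ∈ N.edges) :
    N.edgeUtility c C k i ≤ N.edgeUtility c N.edges k i := by
  have hx := N.x_le_ret_edges hprof h
  have hinvest := N.investSet_edges hprof
  have hI : (k, i) ∈ N.investSet N.edges := by rwa [hinvest]
  have hedges := N.edgeUtility_eq_ret c (hc k i).1 hI (by rwa [hinvest])
  rw [hedges, hinvest]
  exact N.edgeUtility_le_of_le c hx (N.ret_le_ret_edges hC)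

lemma utility_le_utility_edges (hprof : N.Profitable) (hc : N.IsCollateral c)
    {C : Finset (Fin n × Fin n)} (hC : N.IsProfile C) (i : Fin n) :
    N.utility c C i ≤ N.utility c N.edges i := by
  refine Finset.sum_le_sum fun k _ => ?_
  split_ifs with h
  exacts [N.edgeUtility_le_edgeUtility_edges c hprof hc hC h, le_rfl]

lemma coopCount_mono {C C' : Finset (Fin n × Fin n)} (h : C ⊆ C') (i : Fin n) :
    coopCount C i ≤ coopCount C' i :=
  Finset.card_le_card (Finset.filter_subset_filter _ h)

end InvestmentNetwork

/-- **Profitable investments (Observation 1).**  If every enterprise is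
profitable, then for every collateral matrix the all-cooperate profile is a
Nash equilibrium of the induced game, and no collateral is realized at this
profile: every investing player receives an enterprise return of at least her
investment from each of her edges. -/
theorem allCooperate_is_nashEq {n : ℕ} (N : InvestmentNetwork n)
    (hprof : N.Profitable)
    (c : Fin n → Fin n → ℝ) (hc : N.IsCollateral c) :
    N.NashEq c N.edges ∧
      ∀ k i : Fin n, (k, i) ∈ N.edges →
        N.x k i ≤ N.ret (N.investSet N.edges) k i := by
  refine ⟨⟨subset_rfl, fun i C hC _ => ?_⟩, fun k i h => ?_⟩
  · rcases (N.utility_le_utility_edges c hprof hc hC i).lt_or_eq with hlt | heq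
    · exact Or.inl hlt
    · exact Or.inr ⟨heq, InvestmentNetwork.coopCount_mono hC i⟩
  · rw [N.investSet_edges hprof]
    exact N.x_le_ret_edges hprof h
end

section
/- Monotonicity of best replies: in the network investment game with a fixed collateral matrix, fix a subset A of edges, an enterprise vertex k, and a player i with (k,i)∈E and (k,i)∉A. If, when the set of cooperate edges is A, player i strictly prefers to cooperate over defecting with respect to k, then for every set of cooperate edges B ⊇ A player i strictly prefers to cooperate over defecting with respect to k as well. -/
open scoped BigOperators Classical

/-!
Cooperating is weakly better than defecting exactly when the edge `(k,i)` survives the default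
process and its return covers `x k i - c k i`. Enlarging the cooperate set enlarges the greatest
consistent invest set, hence the capital `r` raised by `k`, and the return
`(1 + α k) (1 - Z k / r) x k i` is nondecreasing in `r` because `Z k ≥ 0`.
-/

namespace InvestmentNetwork

variable {n : ℕ} (N : InvestmentNetwork n)

lemma isEnterprise_of_raised_pos {I : Finset (Fin n × Fin n)} {k : Fin n}
    (h : 0 < N.raised I k) : N.IsEnterprise k := by
  have h' : ∑ _j : Fin n, (0 : ℝ) < ∑ j, if (k, j) ∈ I then N.x k j else 0 := by
    rwa [Finset.sum_const_zero]
  obtain ⟨j, -, hj⟩ := Finset.exists_lt_of_sum_lt h'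
  split_ifs at hj
  exacts [⟨j, hj⟩, absurd hj (lt_irrefl 0)]

lemma investSet_mono {A B : Finset (Fin n × Fin n)} (h : A ⊆ B) :
    N.investSet A ⊆ N.investSet B := by
  intro e he
  simp only [investSet, Finset.mem_filter] at he ⊢
  obtain ⟨heA, I, hI, heI⟩ := he
  exact ⟨h heA, I, ⟨hI.1.trans h, hI.2⟩, heI⟩

lemma ret_mono {I J : Finset (Fin n × Fin n)} (h : I ⊆ J) {k : Fin n}
    (hI : 0 < N.raised I k) (i : Fin n) : N.ret I k i ≤ N.ret J k i := by
  have hIJ := N.raised_mono h k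
  have hJ : 0 < N.raised J k := hI.trans_le hIJ
  have hα : 0 ≤ 1 + N.α k := by linarith [N.α_pos k (N.isEnterprise_of_raised_pos hI)]
  refine max_le_max le_rfl ?_
  rw [mul_assoc, mul_assoc]
  refine mul_le_mul_of_nonneg_left ?_ hα
  rw [← mul_div_assoc, ← mul_div_assoc, div_le_div_iff₀ hI hJ]
  nlinarith [mul_nonneg (mul_nonneg (N.Z_nonneg k) (N.x_nonneg k i)) (sub_nonneg.2 hIJ)]

lemma x_le_edgeUtility_iff (c : Fin n → Fin n → ℝ) {C : Finset (Fin n × Fin n)} {k i : Fin n}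
    (hC : (k, i) ∈ C) (hx : 0 < N.x k i) :
    N.x k i ≤ N.edgeUtility c C k i ↔
      (k, i) ∈ N.investSet C ∧ N.x k i - c k i ≤ N.ret (N.investSet C) k i := by
  unfold edgeUtility
  by_cases hI : (k, i) ∈ N.investSet C
  · simp only [hC, hI, not_true_eq_false, if_false, true_and]
    split_ifs <;> constructor <;> intro <;> linarith
  · simp only [hC, hI, not_true_eq_false, not_false_eq_true, if_false, if_true, false_and,
      iff_false, not_le]
    exact hx

lemma strictlyPrefersCoop_iff (c : Fin n → Fin n → ℝ) (C : Finset (Fin n × Fin n))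
    {k i : Fin n} (hx : 0 < N.x k i) :
    N.StrictlyPrefersCoop c C k i ↔
      (k, i) ∈ N.investSet (insert (k, i) C) ∧
        N.x k i - c k i ≤ N.ret (N.investSet (insert (k, i) C)) k i :=
  N.x_le_edgeUtility_iff c (Finset.mem_insert_self _ _) hx

end InvestmentNetwork

theorem bestReply_monotone_general {n : ℕ} (N : InvestmentNetwork n)
    (c : Fin n → Fin n → ℝ)
    (A B : Finset (Fin n × Fin n))
    (hAB : A ⊆ B)
    (k : Fin n) (i : Fin n)
    (hE : (k, i) ∈ N.edges)
    (hpref : N.StrictlyPrefersCoop c A k i) :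
    N.StrictlyPrefersCoop c B k i := by
  have hx : 0 < N.x k i := (Finset.mem_filter.mp hE).2
  obtain ⟨hinvA, hretA⟩ := (N.strictlyPrefersCoop_iff c A hx).mp hpref
  have hsub := N.investSet_mono (Finset.insert_subset_insert (k, i) hAB)
  refine (N.strictlyPrefersCoop_iff c B hx).mpr ⟨hsub hinvA, hretA.trans ?_⟩
  exact N.ret_mono hsub (hx.trans_le (N.x_le_raised hinvA)) i

/-- **Monotonicity of best replies (Proposition 1(2)).**  Fix a collateral
matrix, a subset `A` of edges, an enterprise vertex `k` and a player `i` with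
`(k,i) ∈ E`, `(k,i) ∉ A`.  If, when the cooperate edges are `A`, player `i`
strictly prefers to cooperate over defecting w.r.t. `k`, then for every
cooperate-edge set `B ⊇ A` she strictly prefers to cooperate w.r.t. `k` as
well. -/
theorem bestReply_monotone {n : ℕ} (N : InvestmentNetwork n)
    (c : Fin n → Fin n → ℝ) (hc : N.IsCollateral c)
    (A B : Finset (Fin n × Fin n))
    (hA : N.IsProfile A) (hB : N.IsProfile B) (hAB : A ⊆ B)
    (k : Fin n) (hk : N.IsEnterprise k) (i : Fin n)
    (hE : (k, i) ∈ N.edges) (hiA : (k, i) ∉ A)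
    (hpref : N.StrictlyPrefersCoop c A k i) :
    N.StrictlyPrefersCoop c B k i :=
  bestReply_monotone_general N c A B hAB k i hE hpref
end

section
/- Full-collateral condition: let K be the set of players with investment opportunities in enterprise k, fix A_k ⊂ K and a player i ∈ K∖A_k. (1) If x_{ki} + Σ_{j∈A_k} x_{kj} ≤ Z_k, then under the profile where the players of A_k invest in k and all other players in K defect, player i prefers to cooperate with respect to k only if she has a full collateral c_{ki} = x_{ki} and is not in default. (2) Conversely, if for every partial collateral c_{ki} < x_{ki} player i's utility from enterprise k is less than x_{ki} under the profile where exactly the players A_k ∪ {i} invest in k and all other players in K defect, then x_{ki} + Σ_{j∈A_k} x_{kj} ≤ Z_k. -/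
open scoped BigOperators Classical

namespace InvestmentNetwork

/-- The enterprise return to investor `i` in enterprise `k` when the set of
players investing in `k` is exactly `S`. -/
noncomputable def retOf (N : InvestmentNetwork n) (S : Finset (Fin n)) (k i : Fin n) : ℝ :=
  max 0 ((1 + N.α k) * ((∑ j ∈ S, N.x k j) - N.Z k) * (N.x k i / ∑ j ∈ S, N.x k j))

end InvestmentNetwork

/-- The utility of an investing player whose investment is `xki`, collateral is
`ci` and enterprise return is `R`. -/
noncomputable def coopUtilOf (xki ci R : ℝ) : ℝ :=
  if R ≤ xki - ci then ci + R else if R ≤ xki then xki else R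

lemma raised_mono {n : ℕ} (N : InvestmentNetwork n) {I I' : Finset (Fin n × Fin n)}
    (h : I ⊆ I') (k : Fin n) : N.raised I k ≤ N.raised I' k := by
  unfold InvestmentNetwork.raised
  refine Finset.sum_le_sum fun j _ => ?_
  by_cases hj : (k, j) ∈ I
  · simp [hj, h hj]
  · simp only [hj, if_neg, if_false]
    split <;> simp [N.x_nonneg]

lemma mem_investSet_sub {n : ℕ} (N : InvestmentNetwork n) {C : Finset (Fin n × Fin n)}
    {e : Fin n × Fin n} (he : e ∈ N.investSet C) :
    N.Z e.2 ≤ N.raised (N.investSet C) e.2 := by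
  simp only [InvestmentNetwork.investSet, Finset.mem_filter] at he
  obtain ⟨-, I, hI, heI⟩ := he
  have hsub : I ⊆ N.investSet C := by
    intro f hf
    simp only [InvestmentNetwork.investSet, Finset.mem_filter]
    exact ⟨hI.1 hf, I, hI, hf⟩
  exact (hI.2 e heI).trans (raised_mono N hsub e.2)

/-- **Full-collateral condition (Lemma 2).**  Let `A` be a set of investors of
enterprise `k` and `i ∉ A` another investor of `k`.
(1) If `x k i + ∑_{j ∈ A} x k j ≤ Z k`, then in any profile in which, among
the investors of `k`, exactly the players of `A` invest and all others defect
while `i` cooperates, player `i` prefers cooperation w.r.t. `k` (i.e. her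
utility from the edge `(k,i)` is at least the defect utility `x k i`) only if
her collateral is full (`c k i = x k i`) and she is not in default.
(2) Conversely, if for every partial collateral `c k i < x k i` the utility of
`i` from `k` is less than `x k i` when exactly the players `A ∪ {i}` invest in
`k`, then `x k i + ∑_{j ∈ A} x k j ≤ Z k`. -/
theorem full_collateral_condition {n : ℕ} (N : InvestmentNetwork n)
    (k i : Fin n) (A : Finset (Fin n))
    (hAK : ∀ j ∈ A, 0 < N.x k j) (hiK : 0 < N.x k i) (hiA : i ∉ A) :
    ((N.x k i + ∑ j ∈ A, N.x k j ≤ N.Z k →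
       ∀ (c : Fin n → Fin n → ℝ), N.IsCollateral c → c k i ≤ N.x k i →
       ∀ C : Finset (Fin n × Fin n), N.IsProfile C → (k, i) ∈ C →
         (∀ j ∈ A, (k, j) ∈ N.investSet C) →
         (∀ j, 0 < N.x k j → j ∉ A → j ≠ i → (k, j) ∉ C) →
         N.x k i ≤ N.edgeUtility c C k i →
         c k i = N.x k i ∧ ¬ N.Defaults C i)
     ∧
     ((∀ ci : ℝ, 0 ≤ ci → ci < N.x k i →
         coopUtilOf (N.x k i) ci (N.retOf (insert i A) k i) < N.x k i) →
       N.x k i + ∑ j ∈ A, N.x k j ≤ N.Z k)) := by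
  have hα : 0 < N.α k := N.α_pos k ⟨i, hiK⟩
  have hsumA : 0 ≤ ∑ j ∈ A, N.x k j := Finset.sum_nonneg fun j _ => N.x_nonneg k j
  constructor
  · -- Part 1
    intro hZ c hc hci C hC hkiC hAinv hExcl hutil
    by_cases hinv : (k, i) ∈ N.investSet C
    · -- raised at k equals x k i + ∑_A
      have hraised : N.raised (N.investSet C) k = N.x k i + ∑ j ∈ A, N.x k j := by
        have hfilter : (Finset.univ.filter (fun j => (k, j) ∈ N.investSet C))
            = insert i A := by
          ext j
          simp only [Finset.mem_filter, Finset.mem_univ, true_and, Finset.mem_insert]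
          constructor
          · intro hj
            have hjC : (k, j) ∈ C := Finset.mem_filter.mp hj |>.1
            have hjE : (k, j) ∈ N.edges := hC hjC
            have hxj : 0 < N.x k j := by
              simpa [InvestmentNetwork.edges] using hjE
            by_contra hcon
            push_neg at hcon
            exact hExcl j hxj hcon.2 hcon.1 hjC
          · rintro (rfl | hj)
            · exact hinv
            · exact hAinv j hj
        unfold InvestmentNetwork.raised
        rw [← Finset.sum_filter, hfilter, Finset.sum_insert hiA]
      have hretz : N.ret (N.investSet C) k i = 0 := by
        unfold InvestmentNetwork.ret
        rw [hraised]
        have h1 : (1 + N.α k) * (N.x k i + ∑ j ∈ A, N.x k j - N.Z k) ≤ 0 :=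
          mul_nonpos_of_nonneg_of_nonpos (by linarith) (by linarith)
        have h2 : 0 ≤ N.x k i / (N.x k i + ∑ j ∈ A, N.x k j) :=
          div_nonneg (N.x_nonneg k i) (by linarith)
        exact max_eq_left (mul_nonpos_of_nonpos_of_nonneg h1 h2)
      have hu : N.edgeUtility c C k i = c k i := by
        unfold InvestmentNetwork.edgeUtility
        rw [if_neg (by simpa using hkiC), if_neg (by simpa using hinv), hretz,
          if_pos (by linarith)]
        ring
      rw [hu] at hutil
      have hfull : c k i = N.x k i := le_antisymm hci hutil
      refine ⟨hfull, ?_⟩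
      intro hdef
      exact absurd (mem_investSet_sub N hinv) (not_le.mpr hdef)
    · -- i cooperates but defaults: utility 0 < x k i, contradiction
      have hu : N.edgeUtility c C k i = 0 := by
        unfold InvestmentNetwork.edgeUtility
        rw [if_neg (by simpa using hkiC), if_pos (by simpa using hinv)]
      rw [hu] at hutil
      linarith
  · -- Part 2
    intro h
    by_contra hcon
    push_neg at hcon
    set S := N.x k i + ∑ j ∈ A, N.x k j with hS
    have hSpos : 0 < S := by positivity
    have hR : N.retOf (insert i A) k i
        = (1 + N.α k) * (S - N.Z k) * (N.x k i / S) := by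
      unfold InvestmentNetwork.retOf
      rw [Finset.sum_insert hiA, ← hS]
      exact max_eq_right (le_of_lt (mul_pos (mul_pos (by linarith) (by linarith))
        (div_pos hiK hSpos)))
    have hRpos : 0 < N.retOf (insert i A) k i := by
      rw [hR]
      exact mul_pos (mul_pos (by linarith) (by linarith)) (div_pos hiK hSpos)
    set R := N.retOf (insert i A) k i with hRdef
    by_cases hRle : R ≤ N.x k i
    · have := h (N.x k i - R) (by linarith) (by linarith)
      unfold coopUtilOf at this
      rw [if_pos (by linarith)] at this
      linarith
    · have := h 0 le_rfl hiK
      unfold coopUtilOf at this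
      rw [if_neg (by linarith), if_neg (by linarith)] at this
      linarith
end

section
/- One in for free and the rest follow (single enterprise): fix a set A of players in the single-enterprise model and assume every player in A cooperates. If there exists a player i ∉ A with zero collateral (c_i = 0) who has a strict best reply to cooperate for every action profile of the remaining players A^c∖{i}, then, given that the players in A ∪ {i} cooperate, every other player has a strict best reply to cooperate, even with zero collateral. -/
open scoped BigOperators Classical

/-- The single-enterprise (star) model: one enterprise with operational cost
`Z ≥ 0` and interest rate `α > 0`, and `n` potential investors, where investor
`i` may invest the amount `x i > 0`.  The enterprise is profitable:
`(1 + α) * (∑ x - Z) ≥ ∑ x`. -/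
structure StarGame (n : ℕ) where
  x : Fin n → ℝ
  Z : ℝ
  α : ℝ
  x_pos : ∀ i, 0 < x i
  Z_nonneg : 0 ≤ Z
  α_pos : 0 < α
  profitable : (∑ i, x i) ≤ (1 + α) * ((∑ i, x i) - Z)

namespace StarGame

variable {n : ℕ}

/-- The enterprise return to a cooperating investor `i` when `S` is the set of
cooperators: `R_i = max (0, (1+α)(∑_{j∈S} x_j − Z) · x_i / ∑_{j∈S} x_j)`
(in particular it is `0` if the enterprise defaults,
i.e. if `∑_{j∈S} x_j < Z`). -/
noncomputable def ret (G : StarGame n) (S : Finset (Fin n)) (i : Fin n) : ℝ :=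
  max 0 ((1 + G.α) * ((∑ j ∈ S, G.x j) - G.Z) * (G.x i / ∑ j ∈ S, G.x j))

/-- The utility of a cooperating investor `i` with collateral `c i` when the
set of cooperators is `S` (the collateral is realized when the return falls
below the invested amount). -/
noncomputable def coopUtil (G : StarGame n) (c : Fin n → ℝ) (S : Finset (Fin n))
    (i : Fin n) : ℝ :=
  if G.ret S i ≤ G.x i - c i then c i + G.ret S i
  else if G.ret S i ≤ G.x i then G.x i
  else G.ret S i

/-- The utility of investor `i` under the profile with cooperator set `S`. -/
noncomputable def utility (G : StarGame n) (c : Fin n → ℝ) (S : Finset (Fin n))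
    (i : Fin n) : ℝ :=
  if i ∈ S then G.coopUtil c S i else G.x i

/-- `S` is a Nash equilibrium of the game induced by the collateral vector `c`,
with ties broken towards cooperating: every cooperator weakly prefers
cooperating, and every defector strictly prefers defecting. -/
def NashEq (G : StarGame n) (c : Fin n → ℝ) (S : Finset (Fin n)) : Prop :=
  (∀ i ∈ S, G.x i ≤ G.coopUtil c S i) ∧
    ∀ i ∉ S, G.coopUtil c (insert i S) i < G.x i

/-- A viable collateral vector: nonnegative collaterals for which all-cooperate
is the unique Nash equilibrium of the induced game. -/
def Viable (G : StarGame n) (c : Fin n → ℝ) : Prop :=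
  (∀ i, 0 ≤ c i) ∧ G.NashEq c Finset.univ ∧ ∀ S, G.NashEq c S → S = Finset.univ

/-- The total collateral of a collateral vector. -/
noncomputable def total (c : Fin n → ℝ) : ℝ := ∑ i, c i

/-- An optimal solution of the single-enterprise collateral minimization
problem: a viable collateral vector of minimum total collateral. -/
def Optimal (G : StarGame n) (c : Fin n → ℝ) : Prop :=
  G.Viable c ∧ ∀ c', G.Viable c' → total c ≤ total c'

/-- A minimal collateral vector: viable, and decreasing any single entry by any
`ε > 0` destroys viability. -/
def Minimal (G : StarGame n) (c : Fin n → ℝ) : Prop :=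
  G.Viable c ∧ ∀ (i : Fin n) (ε : ℝ), 0 < ε → ¬ G.Viable (Function.update c i (c i - ε))

/-- The permutation `σ` (listing the players in the order
`σ 1, σ 2, …, σ n`) is an order of iterated elimination of strictly dominated
strategies for the collateral vector `c`, leading to all-cooperate: at every
position `t`, given that the players at earlier positions cooperate, player
`σ t` strictly prefers to cooperate (ties broken towards cooperating) whatever
the remaining players do. -/
def ElimOrder (G : StarGame n) (c : Fin n → ℝ) (σ : Equiv.Perm (Fin n)) : Prop :=
  ∀ (t : Fin n) (S : Finset (Fin n)), (∀ s, s < t → σ s ∈ S) →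
    G.x (σ t) ≤ G.coopUtil c (insert (σ t) S) (σ t)

end StarGame

/-- **One in for free and the rest follow (Lemma 4).**  Fix a set `A` of
players, all of whom cooperate.  If some player `i ∉ A` with zero collateral
has a strict best reply to cooperate (ties broken towards cooperating) for
every action profile of the remaining players `Aᶜ \ {i}`, then, given that the
players of `A ∪ {i}` cooperate, every other player also has a strict best
reply to cooperate, even with zero collateral. -/
theorem one_in_for_free {n : ℕ} (G : StarGame n)
    (c : Fin n → ℝ) (hc : ∀ j, 0 ≤ c j)
    (A : Finset (Fin n)) (i : Fin n) (hiA : i ∉ A) (hci : c i = 0)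
    (hbest : ∀ S : Finset (Fin n), A ⊆ S → G.x i ≤ G.coopUtil c (insert i S) i) :
    ∀ m : Fin n, m ∉ A → m ≠ i →
      ∀ S : Finset (Fin n), A ⊆ S → i ∈ S →
        ∀ c' : Fin n → ℝ, (∀ j, 0 ≤ c' j) → c' m = 0 →
          G.x m ≤ G.coopUtil c' (insert m S) m := by
  intro m hmA hmi S hAS hiS c' hc' hc'm
  have key : ∀ (cc : Fin n → ℝ) (T : Finset (Fin n)) (j : Fin n), cc j = 0 →
      G.coopUtil cc T j = G.ret T j := by
    intro cc T j hj
    unfold StarGame.coopUtil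
    rw [hj, sub_zero, zero_add]
    by_cases h : G.ret T j ≤ G.x j
    · simp [h]
    · simp [h]
  rw [key c' _ m hc'm]
  have hS0 : A ⊆ (insert m S) \ {i} := by
    intro a ha
    rw [Finset.mem_sdiff, Finset.mem_insert]
    refine ⟨Or.inr (hAS ha), ?_⟩
    simp only [Finset.mem_singleton]
    rintro rfl; exact hiA ha
  have heq : insert i ((insert m S) \ {i}) = insert m S := by
    ext a
    simp only [Finset.mem_insert, Finset.mem_sdiff, Finset.mem_singleton]
    by_cases h : a = i
    · subst h; simp [hiS]
    · simp [h]
  have hb := hbest _ hS0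
  rw [heq, key c _ i hci] at hb
  set T := ∑ j ∈ insert m S, G.x j with hT
  have hTpos : 0 < T := Finset.sum_pos (fun j _ => G.x_pos j) ⟨m, Finset.mem_insert_self m S⟩
  unfold StarGame.ret at hb ⊢
  rw [← hT] at hb ⊢
  have hxi := G.x_pos i
  have hxm := G.x_pos m
  have hb' : G.x i ≤ (1 + G.α) * (T - G.Z) * (G.x i / T) := by
    rcases le_max_iff.mp hb with h | h
    · linarith
    · exact h
  have hK : T ≤ (1 + G.α) * (T - G.Z) := by
    by_contra h
    push_neg at h
    have h2 : (1 + G.α) * (T - G.Z) * (G.x i / T) < T * (G.x i / T) :=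
      mul_lt_mul_of_pos_right h (div_pos hxi hTpos)
    have h3 : T * (G.x i / T) = G.x i := by field_simp
    linarith
  refine le_max_of_le_right ?_
  have h1 : G.x m = T * (G.x m / T) := by field_simp
  calc G.x m = T * (G.x m / T) := h1
    _ ≤ (1 + G.α) * (T - G.Z) * (G.x m / T) :=
        mul_le_mul_of_nonneg_right hK (div_nonneg hxm.le hTpos.le)
end

section
/- Optimal partial collaterals: in the single-enterprise model with players indexed so that x_1 ≥ x_2 ≥ … ≥ x_n, fix any optimal solution of the collateral minimization problem and let A be the set of players receiving full collateral in that solution, X_A = Σ_{i∈A} x_i, and B = [n]∖A. Then there exists an optimal solution in which the players in A receive full collaterals and every player i ∈ B receives collateral c_i = max(0, x_i[1 − (1+α)(1 − Z/(X_A + Σ_{j≤i, j∈B} x_j))]). -/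
open scoped BigOperators Classical

/-!
A viable collateral vector lets the players join the set of cooperators one at a time, each
weakly preferring to cooperate given those already in (`Reachable`). A player outside `A` who
joins when the cooperators invest `P` in total must hold collateral at least
`x i * max 0 (1 - (1 + α) * (1 - Z / P))`, and the players of `A` add at most `X_A` to `P`, so
the collateral outside `A` is at least the cost of the order in which these players join. By an
exchange argument that cost is least when they join in decreasing order of investment, and
`partialCollaterals A` attains exactly this bound while staying viable: the least-indexed
defector of any other equilibrium would in fact prefer to cooperate.
-/

namespace StarGame

variable {n : ℕ} {G : StarGame n} {c : Fin n → ℝ} {S T : Finset (Fin n)} {i : Fin n}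

lemma ret_nonneg : 0 ≤ G.ret S i := le_max_left _ _

lemma le_coopUtil_iff : G.x i ≤ G.coopUtil c S i ↔ G.x i - c i ≤ G.ret S i := by
  unfold coopUtil
  split_ifs <;> constructor <;> intro <;> linarith

lemma coopUtil_lt_iff : G.coopUtil c S i < G.x i ↔ G.ret S i < G.x i - c i := by
  rw [← not_le, ← not_le, le_coopUtil_iff]

lemma sum_x_pos (hi : i ∈ S) : 0 < ∑ j ∈ S, G.x j :=
  Finset.sum_pos (fun j _ => G.x_pos j) ⟨i, hi⟩

lemma ret_eq (hi : i ∈ S) :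
    G.ret S i = G.x i * max 0 ((1 + G.α) * (1 - G.Z / ∑ j ∈ S, G.x j)) := by
  have hS := (sum_x_pos (G := G) hi).ne'
  rw [ret, mul_max_of_nonneg _ _ (G.x_pos i).le, mul_zero]
  congr 1
  field_simp

lemma ret_mono (hi : i ∈ S) (hST : S ⊆ T) : G.ret S i ≤ G.ret T i := by
  have hS := sum_x_pos (G := G) hi
  rw [ret_eq hi, ret_eq (hST hi)]
  have := G.α_pos
  have := G.Z_nonneg
  have := (G.x_pos i).le
  gcongr
  exact fun j _ _ => (G.x_pos j).le

lemma nashEq_univ (hc : ∀ i, 0 ≤ c i) : G.NashEq c Finset.univ := by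
  refine ⟨fun i _ => le_coopUtil_iff.2 ?_, fun i hi => absurd (Finset.mem_univ i) hi⟩
  have hX := sum_x_pos (G := G) (Finset.mem_univ i)
  have hret : G.x i ≤ (1 + G.α) * ((∑ j, G.x j) - G.Z) * (G.x i / ∑ j, G.x j) :=
    calc G.x i = (∑ j, G.x j) * (G.x i / ∑ j, G.x j) := by field_simp
      _ ≤ _ := mul_le_mul_of_nonneg_right G.profitable (div_nonneg (G.x_pos i).le hX.le)
  have hmax : (1 + G.α) * ((∑ j, G.x j) - G.Z) * (G.x i / ∑ j, G.x j) ≤ G.ret Finset.univ i :=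
    le_max_right _ _
  linarith [hc i]

lemma NashEq.lt_x_of_notMem (hS : G.NashEq c S) (hi : i ∉ S) : c i < G.x i := by
  have := coopUtil_lt_iff.1 (hS.2 i hi)
  linarith [ret_nonneg (G := G) (S := insert i S) (i := i)]

lemma NashEq.of_min (hS : G.NashEq (fun j => min (c j) (G.x j)) S) : G.NashEq c S := by
  refine ⟨fun i hi => le_coopUtil_iff.2 ?_, fun i hi => coopUtil_lt_iff.2 ?_⟩
  · linarith [le_coopUtil_iff.1 (hS.1 i hi), min_le_left (c i) (G.x i)]
  · have hci : c i < G.x i := (min_lt_iff.1 (hS.lt_x_of_notMem hi)).resolve_right (lt_irrefl _)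
    have := coopUtil_lt_iff.1 (hS.2 i hi)
    rwa [min_eq_left hci.le] at this

lemma Viable.min_x (hc : G.Viable c) : G.Viable (fun j => min (c j) (G.x j)) :=
  have hnn : ∀ j, 0 ≤ min (c j) (G.x j) := fun j => le_min (hc.1 j) (G.x_pos j).le
  ⟨hnn, nashEq_univ hnn, fun _ hS => hc.2.2 _ hS.of_min⟩

lemma Optimal.le_x (hc : G.Optimal c) (i : Fin n) : c i ≤ G.x i := by
  by_contra! hi
  have hlt : total (fun j => min (c j) (G.x j)) < total c :=
    Finset.sum_lt_sum (fun j _ => min_le_left _ _) ⟨i, Finset.mem_univ i, min_lt_of_right_lt hi⟩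
  exact hlt.not_ge (hc.2 _ hc.1.min_x)

noncomputable def collateralRate (G : StarGame n) (P : ℝ) : ℝ :=
  max 0 (1 - (1 + G.α) * (1 - G.Z / P))

lemma collateralRate_eq (P : ℝ) :
    G.collateralRate P = max 0 ((1 + G.α) * G.Z / P - G.α) := by
  rw [collateralRate]
  ring_nf

lemma collateralRate_anti {P Q : ℝ} (hP : 0 < P) (hPQ : P ≤ Q) :
    G.collateralRate Q ≤ G.collateralRate P := by
  have := G.α_pos
  have := G.Z_nonneg
  unfold collateralRate
  gcongr

-- Letting the larger investor `b` join before `a` is cheaper.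
lemma collateralRate_exchange {Y a b : ℝ} (hY : 0 ≤ Y) (ha : 0 < a) (hab : a ≤ b) :
    b * G.collateralRate (Y + b) + a * G.collateralRate (Y + a + b) ≤
      a * G.collateralRate (Y + a) + b * G.collateralRate (Y + a + b) := by
  have hα := G.α_pos
  have hK : 0 ≤ (1 + G.α) * G.Z := mul_nonneg (by linarith) G.Z_nonneg
  have hb : 0 < b := ha.trans_le hab
  simp only [collateralRate_eq]
  set K := (1 + G.α) * G.Z
  rcases le_or_gt (K / (Y + a + b) - G.α) 0 with hr | hr
  · rw [max_eq_left hr, mul_zero, mul_zero, add_zero, add_zero,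
      mul_max_of_nonneg _ _ hb.le, mul_max_of_nonneg _ _ ha.le, mul_zero, mul_zero]
    refine max_le_max le_rfl (sub_nonneg.1 ?_)
    have hKle : K ≤ G.α * (Y + a + b) := by
      rwa [sub_nonpos, div_le_iff₀ (by positivity)] at hr
    have e : a * (K / (Y + a) - G.α) - b * (K / (Y + b) - G.α) =
        (b - a) * (G.α * ((Y + a) * (Y + b)) - K * Y) / ((Y + a) * (Y + b)) := by
      field_simp
      ring
    rw [e]
    refine div_nonneg (mul_nonneg (by linarith) ?_) (by positivity)
    nlinarith [mul_le_mul_of_nonneg_right hKle hY, mul_pos (mul_pos hα ha) hb]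
  · have hra : 0 < K / (Y + a) - G.α := hr.trans_le (by gcongr; linarith)
    have hrb : 0 < K / (Y + b) - G.α := hr.trans_le (by gcongr; linarith)
    rw [max_eq_right hr.le, max_eq_right hra.le, max_eq_right hrb.le, ← sub_nonneg]
    have e : a * (K / (Y + a) - G.α) + b * (K / (Y + a + b) - G.α) -
        (b * (K / (Y + b) - G.α) + a * (K / (Y + a + b) - G.α)) =
        K * (b - a) * (a * b) / ((Y + a) * (Y + b) * (Y + a + b)) := by
      field_simp
      ring
    rw [e]
    exact div_nonneg (mul_nonneg (mul_nonneg hK (by linarith)) (by positivity)) (by positivity)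

lemma sub_mul_collateralRate_le_ret (hi : i ∈ S) {P : ℝ} (hP : 0 < P)
    (hPS : P ≤ ∑ j ∈ S, G.x j) : G.x i - G.x i * G.collateralRate P ≤ G.ret S i := by
  have := G.α_pos
  have := G.Z_nonneg
  have hx := (G.x_pos i).le
  have key (y : ℝ) : 1 - max 0 (1 - y) ≤ max 0 y := by
    linarith [le_max_right (0 : ℝ) (1 - y), le_max_right (0 : ℝ) y]
  rw [ret_eq hi]
  calc G.x i - G.x i * G.collateralRate P = G.x i * (1 - G.collateralRate P) :=
        (mul_one_sub _ _).symm
    _ ≤ G.x i * max 0 ((1 + G.α) * (1 - G.Z / P)) := by gcongr; exact key _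
    _ ≤ _ := by gcongr

lemma mul_collateralRate_le (hi : i ∈ S) (hc : 0 ≤ c i) (hcx : c i < G.x i)
    (hcoop : G.x i - c i ≤ G.ret S i) {P : ℝ} (hSP : ∑ j ∈ S, G.x j ≤ P) :
    G.x i * G.collateralRate P ≤ c i := by
  have hx := G.x_pos i
  set y := (1 + G.α) * (1 - G.Z / ∑ j ∈ S, G.x j)
  rw [ret_eq hi] at hcoop
  have hy : 0 < y := by
    by_contra! hy
    rw [max_eq_left hy] at hcoop
    linarith
  rw [max_eq_right hy.le] at hcoop
  calc G.x i * G.collateralRate P ≤ G.x i * G.collateralRate (∑ j ∈ S, G.x j) :=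
        mul_le_mul_of_nonneg_left (collateralRate_anti (sum_x_pos hi) hSP) hx.le
    _ = max 0 (G.x i * (1 - y)) := by
        rw [collateralRate, mul_max_of_nonneg _ _ hx.le, mul_zero]
    _ ≤ c i := max_le hc (by rw [mul_one_sub]; linarith)

-- Total of the least collaterals that make the players of `T` join, one by one in increasing
-- index order, cooperators investing `X` being already in.
noncomputable def sortedCost (G : StarGame n) (X : ℝ) (T : Finset (Fin n)) : ℝ :=
  ∑ i ∈ T, G.x i * G.collateralRate (X + ∑ j ∈ T.filter (· ≤ i), G.x j)

lemma sortedCost_insert_of_forall_lt {X : ℝ} {a : Fin n} (ha : ∀ j ∈ T, j < a) :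
    G.sortedCost X (insert a T) =
      G.sortedCost X T + G.x a * G.collateralRate (X + ∑ j ∈ insert a T, G.x j) := by
  have haT : a ∉ T := fun h => lt_irrefl a (ha a h)
  rw [sortedCost, Finset.sum_insert haT, add_comm]
  congr 1
  · refine Finset.sum_congr rfl fun j hj => ?_
    rw [Finset.filter_insert, if_neg (not_le.2 (ha j hj))]
  · rw [Finset.filter_true_of_mem]
    intro j hj
    rcases Finset.mem_insert.1 hj with rfl | hj
    exacts [le_rfl, (ha j hj).le]

lemma sortedCost_insert_le (hx : Antitone G.x) {X : ℝ} (hX : 0 ≤ X) {a : Fin n} (haT : a ∉ T) :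
    G.sortedCost X (insert a T) ≤
      G.sortedCost X T + G.x a * G.collateralRate (X + ∑ j ∈ insert a T, G.x j) := by
  induction T using Finset.induction_on_max with
  | empty => exact (sortedCost_insert_of_forall_lt (by simp)).le
  | insert m T hm ih =>
    obtain ⟨ham, haT⟩ : a ≠ m ∧ a ∉ T := by simpa [not_or] using haT
    rcases ham.lt_or_gt with ham | hma
    · set Y := X + ∑ j ∈ T, G.x j
      have hY : 0 ≤ Y := add_nonneg hX (Finset.sum_nonneg fun j _ => (G.x_pos j).le)
      have hlast : ∀ j ∈ insert a T, j < m := by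
        simpa [ham] using hm
      have hmaT : m ∉ insert a T := fun h => lt_irrefl m (hlast m h)
      have hmT : m ∉ T := fun h => lt_irrefl m (hm m h)
      have e₁ : X + ∑ j ∈ insert a T, G.x j = Y + G.x a := by
        rw [Finset.sum_insert haT]; ring
      have e₂ : X + ∑ j ∈ insert m (insert a T), G.x j = Y + G.x m + G.x a := by
        rw [Finset.sum_insert hmaT, Finset.sum_insert haT]; ring
      have e₃ : X + ∑ j ∈ insert m T, G.x j = Y + G.x m := by
        rw [Finset.sum_insert hmT]; ring
      rw [Finset.insert_comm, sortedCost_insert_of_forall_lt hlast, sortedCost_insert_of_forall_lt hm,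
        e₂, e₃]
      have := ih haT
      rw [e₁] at this
      linarith [collateralRate_exchange (G := G) hY (G.x_pos m) (hx ham.le)]
    · exact (sortedCost_insert_of_forall_lt fun j hj =>
        ((Finset.mem_insert.1 hj).elim (fun h => h ▸ hma) fun h => (hm j h).trans hma)).le

inductive Reachable (G : StarGame n) (c : Fin n → ℝ) : Finset (Fin n) → Prop
  | empty : G.Reachable c ∅
  | step {S : Finset (Fin n)} {a : Fin n} : G.Reachable c S → a ∉ S →
      G.x a - c a ≤ G.ret (insert a S) a → G.Reachable c (insert a S)

lemma Reachable.sub_le_ret (hS : G.Reachable c S) (hi : i ∈ S) (hST : S ⊆ T) :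
    G.x i - c i ≤ G.ret T i := by
  induction hS with
  | empty => simp at hi
  | @step S a _ _ hcoop ih =>
    rcases Finset.mem_insert.1 hi with rfl | hi
    · exact hcoop.trans (ret_mono (Finset.mem_insert_self i S) hST)
    · exact ih hi ((Finset.subset_insert a S).trans hST)

lemma Viable.reachable_univ (hc : G.Viable c) : G.Reachable c Finset.univ := by
  obtain ⟨S, hS, hmax⟩ := (Set.toFinite {S | G.Reachable c S}).exists_maximal ⟨∅, .empty⟩
  have hS : G.Reachable c S := hS
  have hNash : G.NashEq c S := by
    refine ⟨fun i hi => le_coopUtil_iff.2 (hS.sub_le_ret hi subset_rfl), fun a ha => ?_⟩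
    refine coopUtil_lt_iff.2 (not_le.1 fun hcoop => ha ?_)
    exact hmax (hS.step ha hcoop) (Finset.subset_insert a S) (Finset.mem_insert_self a S)
  exact hc.2.2 S hNash ▸ hS

lemma sum_le_sum_add_sum_sdiff (A : Finset (Fin n)) :
    ∑ j ∈ T, G.x j ≤ ∑ j ∈ A, G.x j + ∑ j ∈ T \ A, G.x j := by
  rw [← Finset.sum_union Finset.disjoint_sdiff, Finset.union_sdiff_self_eq_union]
  exact Finset.sum_le_sum_of_subset_of_nonneg Finset.subset_union_right
    fun j _ _ => (G.x_pos j).le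

lemma Reachable.sortedCost_le {A : Finset (Fin n)} (hx : Antitone G.x) (hc : ∀ i, 0 ≤ c i)
    (hlt : ∀ i ∉ A, c i < G.x i) (hS : G.Reachable c S) :
    G.sortedCost (∑ j ∈ A, G.x j) (S \ A) ≤ ∑ i ∈ S \ A, c i := by
  induction hS with
  | empty => simp [sortedCost]
  | @step S a _ haS hcoop ih =>
    by_cases haA : a ∈ A
    · rwa [Finset.insert_sdiff_of_mem _ haA]
    have haSA : a ∉ S \ A := fun h => haS (Finset.mem_sdiff.1 h).1
    have hXA : 0 ≤ ∑ j ∈ A, G.x j := Finset.sum_nonneg fun j _ => (G.x_pos j).le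
    have hbound := sum_le_sum_add_sum_sdiff (G := G) (T := insert a S) A
    rw [Finset.insert_sdiff_of_notMem _ haA] at hbound ⊢
    rw [Finset.sum_insert haSA]
    have := mul_collateralRate_le (Finset.mem_insert_self a S) (hc a) (hlt a haA) hcoop hbound
    linarith [sortedCost_insert_le hx hXA haSA]

noncomputable def partialCollaterals (G : StarGame n) (A : Finset (Fin n)) (i : Fin n) : ℝ :=
  if i ∈ A then G.x i
  else G.x i * G.collateralRate ((∑ j ∈ A, G.x j) + ∑ j ∈ Aᶜ.filter (· ≤ i), G.x j)

lemma total_partialCollaterals (A : Finset (Fin n)) :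
    total (G.partialCollaterals A) = ∑ j ∈ A, G.x j + G.sortedCost (∑ j ∈ A, G.x j) Aᶜ := by
  rw [total, ← Finset.sum_add_sum_compl A]
  congr 1
  · exact Finset.sum_congr rfl fun i hi => if_pos hi
  · exact Finset.sum_congr rfl fun i hi => if_neg (Finset.mem_compl.1 hi)

lemma viable_partialCollaterals (A : Finset (Fin n)) : G.Viable (G.partialCollaterals A) := by
  have hnn (i : Fin n) : 0 ≤ G.partialCollaterals A i := by
    unfold partialCollaterals
    split_ifs
    exacts [(G.x_pos i).le, mul_nonneg (G.x_pos i).le (le_max_left _ _)]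
  refine ⟨hnn, nashEq_univ hnn, fun S hS => ?_⟩
  have hAS : A ⊆ S := fun a haA => by
    by_contra haS
    exact (hS.lt_x_of_notMem haS).ne (if_pos haA)
  refine Finset.eq_univ_of_forall fun i => ?_
  induction i using WellFoundedLT.induction with
  | _ i ih =>
    by_contra hiS
    have hiA : i ∉ A := fun h => hiS (hAS h)
    have hprefix : A ∪ Aᶜ.filter (· ≤ i) ⊆ insert i S := by
      intro j hj
      rcases Finset.mem_union.1 hj with hj | hj
      · exact Finset.mem_insert_of_mem (hAS hj)
      · rcases (Finset.mem_filter.1 hj).2.lt_or_eq with hji | rfl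
        exacts [Finset.mem_insert_of_mem (ih j hji), Finset.mem_insert_self j S]
    have hP : 0 < ∑ j ∈ A ∪ Aᶜ.filter (· ≤ i), G.x j :=
      sum_x_pos (Finset.mem_union_right _ (Finset.mem_filter.2 ⟨Finset.mem_compl.2 hiA, le_rfl⟩))
    have hPS : ∑ j ∈ A ∪ Aᶜ.filter (· ≤ i), G.x j ≤ ∑ j ∈ insert i S, G.x j :=
      Finset.sum_le_sum_of_subset_of_nonneg hprefix fun j _ _ => (G.x_pos j).le
    rw [Finset.sum_union (disjoint_compl_right.mono_right (Finset.filter_subset _ _))] at hP hPS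
    have hcoop := sub_mul_collateralRate_le_ret (G := G) (Finset.mem_insert_self i S) hP hPS
    have hdefect := coopUtil_lt_iff.1 (hS.2 i hiS)
    rw [partialCollaterals, if_neg hiA] at hdefect
    linarith

lemma Viable.total_partialCollaterals_le {A : Finset (Fin n)} (hx : Antitone G.x)
    (hc : G.Viable c) (hA : ∀ i ∈ A, c i = G.x i) (hlt : ∀ i ∉ A, c i < G.x i) :
    total (G.partialCollaterals A) ≤ total c := by
  have hcost := hc.reachable_univ.sortedCost_le hx hc.1 hlt
  rw [← Finset.compl_eq_univ_sdiff] at hcost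
  rw [total_partialCollaterals, total, ← Finset.sum_add_sum_compl A, Finset.sum_congr rfl hA]
  linarith

end StarGame

/-- **Optimal partial collaterals (Theorem 6).**  Index the players so that
`x 1 ≥ x 2 ≥ … ≥ x n`.  Fix an optimal solution `c₀` and let `A` be the set of
players receiving full collateral in it, `X_A = ∑_{i∈A} x i` and `B = Aᶜ`.
Then there is an optimal solution in which the players of `A` receive full
collaterals and every player `i ∈ B` receives the collateral
`max (0, x i [1 − (1+α)(1 − Z/(X_A + ∑_{j ≤ i, j ∈ B} x j))])`. -/
theorem optimal_partial_collaterals {n : ℕ} (G : StarGame n)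
    (hsorted : ∀ i j : Fin n, i ≤ j → G.x j ≤ G.x i)
    (c₀ : Fin n → ℝ) (h₀ : G.Optimal c₀)
    (A : Finset (Fin n)) (hA : ∀ i, i ∈ A ↔ c₀ i = G.x i) :
    ∃ c : Fin n → ℝ, G.Optimal c ∧ (∀ i ∈ A, c i = G.x i) ∧
      ∀ i ∈ Aᶜ, c i =
        max 0 (G.x i * (1 - (1 + G.α) *
          (1 - G.Z / ((∑ j ∈ A, G.x j) + ∑ j ∈ Aᶜ.filter (fun j => j ≤ i), G.x j)))) := by
  have htotal := h₀.1.total_partialCollaterals_le (A := A) (fun i j h => hsorted i j h)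
    (fun i hi => (hA i).1 hi) fun i hi => (h₀.le_x i).lt_of_ne fun h => hi ((hA i).2 h)
  refine ⟨G.partialCollaterals A, ⟨G.viable_partialCollaterals A,
    fun c hc => htotal.trans (h₀.2 c hc)⟩, fun i hi => if_pos hi, fun i hi => ?_⟩
  rw [StarGame.partialCollaterals, if_neg (Finset.mem_compl.1 hi), StarGame.collateralRate,
    mul_max_of_nonneg _ _ (G.x_pos i).le, mul_zero]
end
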